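/- arXiv:1703.04974 — 5 statements merged into one kernel-verified Lean document; each statement's English description precedes it below -/
import Mathlib

section
/- For the cycle C_n on n vertices and any integer k with 2 ≤ k ≤ n, sdiam_k(C_n) = ⌊n(k−1)/k⌋. -/
open SimpleGraph

/-- The Steiner distance of a vertex set `S` in a graph `G`: the minimum number of edges
of a connected subgraph of `G` whose vertex set contains `S`. -/
noncomputable def steinerDist {V : Type*} (G : SimpleGraph V) (S : Set V) : ℕ :=
  sInf {m : ℕ | ∃ H : G.Subgraph, H.Connected ∧ S ⊆ H.verts ∧ H.edgeSet.ncard = m}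

/-- The Steiner `k`-diameter of `G`: the maximum Steiner distance over all `k`-element
vertex subsets. -/
noncomputable def sdiam {V : Type*} [Fintype V] (G : SimpleGraph V) (k : ℕ) : ℕ :=
  sSup {m : ℕ | ∃ S : Finset V, S.card = k ∧ steinerDist G ↑S = m}

/-- The maximum degree of `G`. -/
noncomputable def maxDeg {V : Type*} [Fintype V] (G : SimpleGraph V) : ℕ :=
  Finset.univ.sup fun v => (G.neighborSet v).ncard

/-- The minimum degree of `G`. -/
noncomputable def minDeg {V : Type*} [Fintype V] (G : SimpleGraph V) : ℕ :=
  sInf {d : ℕ | ∃ v : V, (G.neighborSet v).ncard = d}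

/-- `e3 n ℓ d` : minimum number of edges of a graph of order `n` with maximum degree `ℓ`
and Steiner 3-diameter at most `d` (`⊤` if no such graph exists). -/
noncomputable def e3 (n ℓ d : ℕ) : ℕ∞ :=
  sInf {m : ℕ∞ | ∃ G : SimpleGraph (Fin n),
    maxDeg G = ℓ ∧ sdiam G 3 ≤ d ∧ (G.edgeSet.ncard : ℕ∞) = m}

open Finset Fin.CommRing

/-!
Put `d = ⌊n(k-1)/k⌋`, so that `n - d = ⌈n/k⌉`, and measure positions on the cycle from a base
point `c` by `(x - c).val`.

Upper bound: for `|S| = k` there are exactly `k (n - 1 - d) < n` pairs `(x, c)` with `x ∈ S`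
more than `d` steps after `c`, so some `c` is in no such pair: all of `S` lies on the arc
`c, c + 1, …, c + d`, a path with `d` edges.

Lower bound: the evenly spread points `⌊jn/k⌋`, `j < k`, have cyclic gaps at most `⌈n/k⌉`. A
connected subgraph containing them either contains all cycle edges, or misses an edge
`{c - 1, c}` and then lives on the path `c, c + 1, …, c - 1`; there it must contain the whole
stretch from the first spread point after `c` round to the last one before `c`, which has at
least `n - ⌈n/k⌉ = d` edges.
-/

theorem mul_pred_div_lt {n k : ℕ} (hn : 0 < n) (hk : 0 < k) : n * (k - 1) / k < n :=
  Nat.div_lt_of_lt_mul (by rw [mul_comm k n]; exact Nat.mul_lt_mul_of_pos_left (by omega) hn)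

theorem mul_sub_mul_pred_div_lt {n k : ℕ} (hn : 0 < n) (hk : 0 < k) :
    k * (n - 1 - n * (k - 1) / k) < n := by
  have hd := mul_pred_div_lt hn hk
  have hlo := Nat.lt_mul_div_succ (n * (k - 1)) hk
  obtain ⟨e, he⟩ : ∃ e, n = n * (k - 1) / k + e + 1 := ⟨n - 1 - n * (k - 1) / k, by omega⟩
  rw [show n - 1 - n * (k - 1) / k = e by omega]
  obtain ⟨k, rfl⟩ : ∃ k', k = k' + 1 := ⟨k - 1, by omega⟩
  simp only [add_tsub_cancel_right] at hlo he ⊢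
  nlinarith

theorem succ_mul_div_add_le {n k : ℕ} (hk : 0 < k) (j : ℕ) :
    (j + 1) * n / k + n * (k - 1) / k ≤ j * n / k + n := by
  have h1 := Nat.div_mul_le_self ((j + 1) * n) k
  have h2 := Nat.div_mul_le_self (n * (k - 1)) k
  have h3 := Nat.lt_mul_div_succ (j * n) hk
  obtain ⟨k, rfl⟩ : ∃ k', k = k' + 1 := ⟨k - 1, by omega⟩
  simp only [add_tsub_cancel_right] at h2 ⊢
  by_contra! h
  nlinarith

theorem mul_div_lt_succ_mul_div {n k : ℕ} (hk : 0 < k) (hkn : k ≤ n) (j : ℕ) :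
    j * n / k < (j + 1) * n / k := by
  rw [Nat.lt_iff_add_one_le, Nat.le_div_iff_mul_le hk, add_mul, one_mul]
  have := Nat.div_mul_le_self (j * n) k
  nlinarith

theorem Nat.exists_lt_le_succ_of_lt_of_le {f : ℕ → ℕ} {x : ℕ} (h₀ : f 0 < x) :
    ∀ {k : ℕ}, x ≤ f k → ∃ j < k, f j < x ∧ x ≤ f (j + 1)
  | 0, hk => absurd hk (not_le.mpr h₀)
  | k + 1, hk => by
    by_cases hx : x ≤ f k
    · obtain ⟨j, hj, hfj⟩ := exists_lt_le_succ_of_lt_of_le h₀ hx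
      exact ⟨j, by omega, hfj⟩
    · exact ⟨k, by omega, not_le.mp hx, hk⟩

section Position

variable {n : ℕ} [NeZero n]

theorem Fin.val_one_of_two_le (hn : 2 ≤ n) : ((1 : Fin n) : ℕ) = 1 := by
  rw [Fin.val_one', Nat.mod_eq_of_lt hn]

theorem Fin.add_val_sub (x c : Fin n) : c + ((x - c : Fin n) : ℕ) = x := by
  rw [Fin.cast_val_eq_self, add_sub_cancel]

theorem Fin.val_add_natCast_sub (c : Fin n) {i : ℕ} (hi : i < n) :
    ((c + i - c : Fin n) : ℕ) = i := by
  rw [add_sub_cancel_left, Fin.val_cast_of_lt hi]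

theorem Fin.val_natCast_sub_natCast {a b : ℕ} (hba : b ≤ a) (hab : a - b < n) :
    (((a : Fin n) - b : Fin n) : ℕ) = a - b := by
  rw [← Nat.cast_sub hba, Fin.val_cast_of_lt hab]

theorem Fin.val_add_one_sub (hn : 2 ≤ n) {y c : Fin n} (h : y + 1 ≠ c) :
    ((y + 1 - c : Fin n) : ℕ) = (y - c : Fin n) + 1 := by
  have hne : y - c + 1 ≠ 0 := by rwa [← add_sub_right_comm, sub_ne_zero]
  rw [add_sub_right_comm, Fin.val_add, Fin.val_one_of_two_le hn]
  refine Nat.mod_eq_of_lt (lt_of_le_of_ne (Fin.is_lt _) fun heq => hne (Fin.ext ?_))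
  rw [Fin.val_add, Fin.val_one_of_two_le hn, heq, Nat.mod_self, Fin.val_zero]

theorem Fin.card_filter_lt_val_sub (x : Fin n) {m : ℕ} (hm : m < n) :
    #{c : Fin n | m < ((x - c : Fin n) : ℕ)} = n - 1 - m := by
  rw [← Fin.card_Ioi (⟨m, hm⟩ : Fin n)]
  refine card_equiv (Equiv.subLeft x) fun c => ?_
  simp [Fin.lt_def]

end Position

section SteinerDist

variable {V : Type*} {G : SimpleGraph V} {S : Set V}

theorem steinerDist_le {H : G.Subgraph} (hH : H.Connected) (hS : S ⊆ H.verts) :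
    steinerDist G S ≤ H.edgeSet.ncard :=
  Nat.sInf_le ⟨H, hH, hS, rfl⟩

theorem le_steinerDist (hG : G.Connected) {d : ℕ}
    (h : ∀ H : G.Subgraph, H.Connected → S ⊆ H.verts → d ≤ H.edgeSet.ncard) :
    d ≤ steinerDist G S := by
  refine le_csInf ⟨_, ⊤, ?_, fun x _ => Set.mem_univ x, rfl⟩ ?_
  · exact ⟨Subgraph.topIso.connected_iff.mpr hG⟩
  · rintro m ⟨H, hH, hSH, rfl⟩
    exact h H hH hSH

theorem sdiam_eq_of_forall_le [Fintype V] {k d : ℕ}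
    (hle : ∀ S : Finset V, S.card = k → steinerDist G S ≤ d) {S₀ : Finset V} (hS₀ : S₀.card = k)
    (hd : d ≤ steinerDist G S₀) : sdiam G k = d := by
  have hmem : d ∈ {m | ∃ S : Finset V, S.card = k ∧ steinerDist G S = m} :=
    ⟨S₀, hS₀, le_antisymm (hle S₀ hS₀) hd⟩
  refine le_antisymm (csSup_le ⟨d, hmem⟩ ?_) (le_csSup ⟨d, ?_⟩ hmem)
  all_goals rintro m ⟨S, hS, rfl⟩; exact hle S hS

theorem SimpleGraph.Walk.ncard_edgeSet_toSubgraph_le [DecidableEq V] {u v : V} (p : G.Walk u v) :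
    p.toSubgraph.edgeSet.ncard ≤ p.length := by
  rw [Walk.edgeSet_toSubgraph, Walk.edgeSet, ← p.length_edges, ← List.coe_toFinset,
    Set.ncard_coe_finset]
  exact List.toFinset_card_le _

end SteinerDist

section CycleGraph

variable {n : ℕ} [NeZero n]

theorem cycleGraph_adj_iff (hn : 2 ≤ n) {x y : Fin n} :
    (cycleGraph n).Adj x y ↔ y = x + 1 ∨ x = y + 1 := by
  rw [cycleGraph_adj', ← Fin.val_one_of_two_le hn, ← Fin.ext_iff, ← Fin.ext_iff,
    sub_eq_iff_eq_add, sub_eq_iff_eq_add, or_comm, add_comm 1 x, add_comm 1 y]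

theorem cycleGraph_connected_of_neZero : (cycleGraph n).Connected := by
  obtain ⟨m, rfl⟩ := Nat.exists_eq_succ_of_ne_zero (NeZero.ne n)
  exact cycleGraph_connected

theorem exists_walk_add_natCast (hn : 2 ≤ n) (c : Fin n) (m : ℕ) :
    ∃ p : (cycleGraph n).Walk c (c + m),
      p.length = m ∧ ∀ i ≤ m, c + (i : Fin n) ∈ p.support := by
  induction m with
  | zero =>
    exact ⟨Walk.nil.copy rfl (by simp), by simp, fun i hi => by simp [Nat.le_zero.mp hi]⟩
  | succ m ih =>
    obtain ⟨p, hlen, hsupp⟩ := ih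
    have hadj : (cycleGraph n).Adj (c + m) (c + m + 1) :=
      (cycleGraph_adj_iff hn).mpr (Or.inl rfl)
    refine ⟨(p.concat hadj).copy rfl (by push_cast; ring), by simp [hlen], fun i hi => ?_⟩
    rw [Walk.support_copy, Walk.support_concat, List.mem_append, List.mem_singleton]
    rcases Nat.le_succ_iff.mp hi with hi | rfl
    · exact Or.inl (hsupp i hi)
    · exact Or.inr (by push_cast; ring)

theorem steinerDist_cycleGraph_le (hn : 2 ≤ n) {S : Set (Fin n)} (c : Fin n) {m : ℕ}
    (hS : ∀ x ∈ S, ((x - c : Fin n) : ℕ) ≤ m) : steinerDist (cycleGraph n) S ≤ m := by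
  obtain ⟨p, hlen, hsupp⟩ := exists_walk_add_natCast hn c m
  refine (steinerDist_le p.toSubgraph_connected fun x hx => ?_).trans
    (p.ncard_edgeSet_toSubgraph_le.trans hlen.le)
  rw [Walk.verts_toSubgraph, Set.mem_ofPred_eq, ← Fin.add_val_sub x c]
  exact hsupp _ (hS x hx)

theorem exists_forall_val_sub_le (S : Finset (Fin n)) {m : ℕ} (hm : m < n)
    (hS : #S * (n - 1 - m) < n) : ∃ c : Fin n, ∀ x ∈ S, ((x - c : Fin n) : ℕ) ≤ m := by
  by_contra! h
  have hpos : ∀ c : Fin n, 1 ≤ #{x ∈ S | m < ((x - c : Fin n) : ℕ)} := fun c =>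
    let ⟨x, hx, hxc⟩ := h c
    card_pos.mpr ⟨x, mem_filter.mpr ⟨hx, hxc⟩⟩
  have : n ≤ #S * (n - 1 - m) :=
    calc n = ∑ _c : Fin n, 1 := by simp
      _ ≤ ∑ c : Fin n, #{x ∈ S | m < ((x - c : Fin n) : ℕ)} := sum_le_sum fun c _ => hpos c
      _ = ∑ x ∈ S, #{c : Fin n | m < ((x - c : Fin n) : ℕ)} := by
        simp only [card_filter]; exact sum_comm
      _ = #S * (n - 1 - m) := by simp [Fin.card_filter_lt_val_sub _ hm]
  omega

theorem mem_edgeSet_of_val_sub_le_of_lt (hn : 2 ≤ n) {H : (cycleGraph n).Subgraph}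
    (hH : H.Connected) {c : Fin n} (hc : s(c - 1, c) ∉ H.edgeSet) {u w : Fin n}
    (hu : u ∈ H.verts) (hw : w ∈ H.verts) {i : ℕ} (hui : ((u - c : Fin n) : ℕ) ≤ i)
    (hiw : i < ((w - c : Fin n) : ℕ)) : s(c + i, c + i + 1) ∈ H.edgeSet := by
  -- A walk from `u` to `w` leaves `{v | (v - c).val ≤ i}`. Without the edge `{c - 1, c}`, every
  -- edge of `H` changes `(v - c).val` by exactly one, so the walk leaves through
  -- `{c + i, c + i + 1}`.
  obtain ⟨p⟩ := hH.coe.preconnected ⟨u, hu⟩ ⟨w, hw⟩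
  obtain ⟨⟨⟨⟨a, _⟩, ⟨b, _⟩⟩, hab⟩, -, ha, hb⟩ :=
    p.exists_boundary_dart {v | ((v.1 - c : Fin n) : ℕ) ≤ i} hui (by simpa using hiw)
  simp only [Set.mem_ofPred_eq, not_le] at ha hb
  replace hab : H.Adj a b := hab
  rcases (cycleGraph_adj_iff hn).mp (H.adj_sub hab) with rfl | rfl
  · by_cases hac : a + 1 = c
    · subst hac
      exact absurd (H.mem_edgeSet.mpr hab) (by rwa [add_sub_cancel_right] at hc)
    · have hai : ((a - c : Fin n) : ℕ) = i := by have := Fin.val_add_one_sub hn hac; omega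
      rw [← hai, Fin.add_val_sub]
      exact H.mem_edgeSet.mpr hab
  · by_cases hbc : b + 1 = c
    · subst hbc
      exact absurd (H.mem_edgeSet.mpr hab.symm) (by rwa [add_sub_cancel_right] at hc)
    · have := Fin.val_add_one_sub hn hbc
      omega

theorem sub_le_ncard_edgeSet_of_forall_mem (H : (cycleGraph n).Subgraph) (c : Fin n) {a b : ℕ}
    (hb : b < n) (h : ∀ i, a ≤ i → i < b → s(c + i, c + i + 1) ∈ H.edgeSet) :
    b - a ≤ H.edgeSet.ncard := by
  have hinj : Set.InjOn (fun i : ℕ => s(c + (i : Fin n), c + i + 1)) (Set.Ico a b) := by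
    have hpos {p q : ℕ} (hp : p < n) (hq : q < n) (hpq : c + (p : Fin n) = c + q) : p = q := by
      rw [← Fin.val_add_natCast_sub c hp, hpq, Fin.val_add_natCast_sub c hq]
    intro i ⟨_, hi⟩ j ⟨_, hj⟩ hij
    have hsucc (p : ℕ) : c + (p : Fin n) + 1 = c + (p + 1 : ℕ) := by push_cast; ring
    rcases Sym2.eq_iff.mp hij with ⟨h, -⟩ | ⟨h₁, h₂⟩
    · exact hpos (by omega) (by omega) h
    · rw [hsucc] at h₁ h₂
      have := hpos (by omega) (by omega) h₁
      have := hpos (by omega) (by omega) h₂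
      omega
  calc b - a = ((fun i : ℕ => s(c + (i : Fin n), c + i + 1)) '' Set.Ico a b).ncard := by
        rw [hinj.ncard_image, Set.ncard_Ico_nat]
    _ ≤ H.edgeSet.ncard := Set.ncard_le_ncard (by rintro _ ⟨i, hi, rfl⟩; exact h i hi.1 hi.2)

theorem le_ncard_edgeSet_of_forall_val_sub_add_le (hn : 2 ≤ n) {H : (cycleGraph n).Subgraph}
    (hH : H.Connected) {S : Set (Fin n)} (hS : S ⊆ H.verts) {d : ℕ} (hd : d < n)
    (h : ∀ c : Fin n, ∃ u ∈ S, ∃ w ∈ S, ((u - c : Fin n) : ℕ) + d ≤ ((w - c : Fin n) : ℕ)) :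
    d ≤ H.edgeSet.ncard := by
  by_cases hall : ∀ x : Fin n, s(x, x + 1) ∈ H.edgeSet
  · have := sub_le_ncard_edgeSet_of_forall_mem H 0 (a := 0) (b := n - 1) (by omega)
      fun i _ _ => hall _
    omega
  · push Not at hall
    obtain ⟨x, hx⟩ := hall
    obtain ⟨u, hu, w, hw, huw⟩ := h (x + 1)
    have hx' : s(x + 1 - 1, x + 1) ∉ H.edgeSet := by rwa [add_sub_cancel_right]
    have := sub_le_ncard_edgeSet_of_forall_mem H (x + 1) (w - (x + 1)).is_lt fun i h1 h2 =>
      mem_edgeSet_of_val_sub_le_of_lt hn hH hx' (hS hu) (hS hw) h1 h2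
    omega

end CycleGraph

section Spread

def evenSpread (n k : ℕ) [NeZero n] : Finset (Fin n) :=
  (range k).image fun j => ((j * n / k : ℕ) : Fin n)

variable {n k : ℕ} [NeZero n]

theorem card_evenSpread (hk : 0 < k) (hkn : k ≤ n) : #(evenSpread n k) = k := by
  have hmono : StrictMono fun j => j * n / k :=
    strictMono_nat_of_lt_succ (mul_div_lt_succ_mul_div hk hkn)
  have hlt {j : ℕ} (hj : j ∈ range k) : j * n / k < n :=
    Nat.div_lt_of_lt_mul (Nat.mul_lt_mul_of_pos_right (mem_range.mp hj) (NeZero.pos n))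
  rw [evenSpread, card_image_of_injOn, card_range]
  intro i hi j hj hij
  apply hmono.injective
  simp only at hij ⊢
  rw [← Fin.val_cast_of_lt (hlt hi), ← Fin.val_cast_of_lt (hlt hj)]
  exact congrArg Fin.val hij

theorem natCast_mem_evenSpread (hk : 0 < k) {j : ℕ} (hj : j ≤ k) :
    ((j * n / k : ℕ) : Fin n) ∈ evenSpread n k := by
  rcases hj.lt_or_eq with hj | rfl
  · exact mem_image_of_mem _ (mem_range.mpr hj)
  · rw [Nat.mul_div_cancel_left n hk, Fin.natCast_self]
    exact mem_image.mpr ⟨0, mem_range.mpr hk, by simp⟩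

theorem exists_val_sub_add_le_evenSpread (hk : 0 < k) (c : Fin n) :
    ∃ u ∈ evenSpread n k, ∃ w ∈ evenSpread n k,
      ((u - c : Fin n) : ℕ) + n * (k - 1) / k ≤ ((w - c : Fin n) : ℕ) := by
  -- With `s j = j * n / k` we have `s 0 = 0` and `s k = n`. Representing `c` by `c' ∈ (0, n]`,
  -- it lies in a gap `(s j, s (j + 1)]`; take `u = s (j + 1)` and `w = s j`, which are
  -- `n - (s (j + 1) - s j) ≥ n - ⌈n / k⌉` steps apart going around from `u`.
  obtain ⟨c, hc₀, hcn, rfl⟩ : ∃ c' : ℕ, 0 < c' ∧ c' ≤ n ∧ (c' : Fin n) = c := by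
    by_cases hc : c = 0
    · exact ⟨n, NeZero.pos n, le_rfl, by simp [hc]⟩
    · exact ⟨c, Nat.pos_of_ne_zero (Fin.val_ne_iff.mpr hc), c.is_lt.le, Fin.cast_val_eq_self c⟩
  obtain ⟨j, hjk, hjc, hcj⟩ := Nat.exists_lt_le_succ_of_lt_of_le (f := fun j => j * n / k)
    (x := c) (by simpa using hc₀) (k := k) (by simpa [Nat.mul_div_cancel_left n hk] using hcn)
  have hj₁ : (j + 1) * n / k ≤ n := Nat.div_le_of_le_mul (Nat.mul_le_mul_right n hjk)
  refine ⟨_, natCast_mem_evenSpread hk hjk, _, natCast_mem_evenSpread hk hjk.le, ?_⟩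
  have hwrap : ((j * n / k : ℕ) : Fin n) = ((j * n / k + n : ℕ) : Fin n) := by simp
  rw [Fin.val_natCast_sub_natCast hcj (by omega), hwrap,
    Fin.val_natCast_sub_natCast (hcn.trans (Nat.le_add_left _ _)) (by omega)]
  have := succ_mul_div_add_le hk j (n := n)
  omega

end Spread

theorem stmt5 (n k : ℕ) (hk2 : 2 ≤ k) (hkn : k ≤ n) :
    sdiam (SimpleGraph.cycleGraph n) k = n * (k - 1) / k := by
  have hn : 2 ≤ n := hk2.trans hkn
  have hk : 0 < k := by omega
  have : NeZero n := ⟨by omega⟩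
  have hd : n * (k - 1) / k < n := mul_pred_div_lt (by omega) hk
  refine sdiam_eq_of_forall_le (fun S hS => ?_) (card_evenSpread hk hkn) ?_
  · obtain ⟨c, hc⟩ := exists_forall_val_sub_le S hd
      (by rw [hS]; exact mul_sub_mul_pred_div_lt (by omega) hk)
    exact steinerDist_cycleGraph_le hn c hc
  · exact le_steinerDist cycleGraph_connected_of_neZero fun H hH hS =>
      le_ncard_edgeSet_of_forall_val_sub_add_le hn hH hS hd (exists_val_sub_add_le_evenSpread hk)
end

section
/- Let T be a tree of order n with exactly r leaves. If r ≥ 4, then sdiam_3(T) ≤ n − r + 2. -/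
open SimpleGraph

/-! Join a vertex `u ∈ S` to every vertex of `S` by a path. A leaf of the tree can only be an
endpoint of such a path, so the union of these paths is a subtree containing `S` whose vertices
are non-leaves or elements of `S`. A tree on `m` vertices has `m - 1` edges, so for `|S| = 3`
the subtree has at most `(n - r) + 3 - 1` edges. -/

namespace SimpleGraph

variable {V : Type*} {G : SimpleGraph V}

def leafSet (G : SimpleGraph V) : Set V := {v | (G.neighborSet v).ncard = 1}

lemma Walk.IsPath.eq_or_eq_of_mem_leafSet {u v w : V} {p : G.Walk u v} (hp : p.IsPath)
    (hw : w ∈ p.support) (hleaf : w ∈ G.leafSet) : w = u ∨ w = v := by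
  obtain ⟨i, rfl, hi⟩ := Walk.mem_support_iff_exists_getVert.mp hw
  rcases Nat.eq_zero_or_pos i with rfl | hi0
  · exact Or.inl p.getVert_zero
  rcases hi.eq_or_lt with rfl | hlt
  · exact Or.inr p.getVert_length
  have hdeg : (G.neighborSet (p.getVert i)).ncard = 1 := hleaf
  have hfin : (G.neighborSet (p.getVert i)).Finite := Set.finite_of_ncard_pos (by omega)
  have := Set.ncard_le_ncard (p.toSubgraph.neighborSet_subset (p.getVert i)) hfin
  rw [hp.ncard_neighborSet_toSubgraph_internal_eq_two hi0.ne' hlt, hdeg] at this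
  omega

namespace Subgraph

lemma connected_iSup {ι : Type*} {H : ι → G.Subgraph} {u : V} (hH : ∀ i, (H i).Connected)
    (hu : ∀ i, u ∈ (H i).verts) [Nonempty ι] : (⨆ i, H i).Connected := by
  rw [Subgraph.connected_iff', connected_iff_exists_forall_reachable]
  refine ⟨⟨u, by simp [verts_iSup, hu]⟩, ?_⟩
  rintro ⟨v, hv⟩
  obtain ⟨i, hvi⟩ := Set.mem_iUnion.mp (verts_iSup ▸ hv)
  exact ((hH i).preconnected ⟨u, hu i⟩ ⟨v, hvi⟩).map (inclusion (le_iSup H i))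

lemma Connected.ncard_edgeSet_add_one {H : G.Subgraph} (hG : G.IsAcyclic) (hH : H.Connected)
    (hfin : H.verts.Finite) : H.edgeSet.ncard + 1 = H.verts.ncard := by
  have := hfin.to_subtype
  have htree : H.coe.IsTree := ⟨Subgraph.connected_iff'.mp hH, hG.subgraph H⟩
  rw [← H.image_coe_edgeSet_coe, Set.ncard_image_of_injective _
    (Sym2.map.injective Subtype.val_injective), ← Nat.card_coe_set_eq,
    ← Nat.card_coe_set_eq]
  exact (isTree_iff_connected_and_card.mp htree).2

end Subgraph

lemma steinerDist_le {S : Set V} {H : G.Subgraph} (hH : H.Connected) (hS : S ⊆ H.verts) :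
    steinerDist G S ≤ H.edgeSet.ncard :=
  Nat.sInf_le ⟨H, hH, hS, rfl⟩

lemma Connected.exists_connected_subgraph_verts_subset_compl_leafSet_union (hG : G.Connected)
    {S : Finset V} (hS : S.Nonempty) :
    ∃ H : G.Subgraph, H.Connected ∧ ↑S ⊆ H.verts ∧ H.verts ⊆ G.leafSetᶜ ∪ S := by
  obtain ⟨u, hu⟩ := hS
  choose p hp using fun s : S => hG.preconnected.exists_isPath u s
  have : Nonempty S := ⟨⟨u, hu⟩⟩
  refine ⟨⨆ s : S, (p s).toSubgraph,
    Subgraph.connected_iSup (fun s => (p s).toSubgraph_connected)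
      (fun s => (p s).start_mem_verts_toSubgraph), ?_, ?_⟩
  · intro s hs
    exact Subgraph.verts_iSup ▸ Set.mem_iUnion.mpr ⟨⟨s, hs⟩, (p _).end_mem_verts_toSubgraph⟩
  · intro v hv
    obtain ⟨s, hvs⟩ := Set.mem_iUnion.mp (Subgraph.verts_iSup ▸ hv)
    by_cases hleaf : v ∈ G.leafSet
    · rw [Walk.mem_verts_toSubgraph] at hvs
      rcases (hp s).eq_or_eq_of_mem_leafSet hvs hleaf with rfl | rfl
      · exact Or.inr hu
      · exact Or.inr s.2
    · exact Or.inl hleaf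

lemma IsTree.steinerDist_add_one_le [Finite V] (hG : G.IsTree) {S : Finset V}
    (hS : S.Nonempty) : steinerDist G S + 1 ≤ G.leafSetᶜ.ncard + S.card := by
  obtain ⟨H, hH, hSH, hHS⟩ :=
    hG.connected.exists_connected_subgraph_verts_subset_compl_leafSet_union hS
  calc steinerDist G S + 1 ≤ H.edgeSet.ncard + 1 := by grw [steinerDist_le hH hSH]
    _ = H.verts.ncard := hH.ncard_edgeSet_add_one hG.isAcyclic (Set.toFinite _)
    _ ≤ (G.leafSetᶜ ∪ S).ncard := Set.ncard_le_ncard hHS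
    _ ≤ G.leafSetᶜ.ncard + S.card := by grw [Set.ncard_union_le, Set.ncard_coe_finset]

lemma IsTree.sdiam_add_one_le [Fintype V] (hG : G.IsTree) {k : ℕ} (hk : 0 < k) :
    sdiam G k + 1 ≤ G.leafSetᶜ.ncard + k := by
  have : sdiam G k ≤ G.leafSetᶜ.ncard + k - 1 := by
    refine csSup_le' ?_
    rintro _ ⟨S, rfl, rfl⟩
    have := hG.steinerDist_add_one_le (Finset.card_pos.mp hk)
    omega
  omega

end SimpleGraph

theorem stmt6_general {V : Type*} [Fintype V] (T : SimpleGraph V)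
    (hconn : T.Connected) (hac : T.IsAcyclic)
    (n r : ℕ) (hn : Fintype.card V = n)
    (hr : {v : V | (T.neighborSet v).ncard = 1}.ncard = r) :
    sdiam T 3 ≤ n - r + 2 := by
  have hnonleaves : T.leafSetᶜ.ncard = n - r := by
    have := Set.ncard_add_ncard_compl T.leafSet
    rw [show T.leafSet.ncard = r from hr, Nat.card_eq_fintype_card, hn] at this
    omega
  have := IsTree.sdiam_add_one_le ⟨hconn, hac⟩ (k := 3) (by norm_num)
  omega

theorem stmt6 {V : Type*} [Fintype V] (T : SimpleGraph V)
    (hconn : T.Connected) (hac : T.IsAcyclic)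
    (n r : ℕ) (hn : Fintype.card V = n)
    (hr : {v : V | (T.neighborSet v).ncard = 1}.ncard = r) (hr4 : 4 ≤ r) :
    sdiam T 3 ≤ n - r + 2 :=
  stmt6_general T hconn hac n r hn hr
end

section
/- Let G be a connected graph of order n ≥ 3. Then sdiam_3(G) = 2 if and only if n − 2 ≤ δ(G) ≤ n − 1, i.e., the minimum degree of G is at least n − 2. -/
open SimpleGraph

/-! A connected subgraph with `p` vertices has at least `p - 1` edges. Hence every 3-set has
Steiner distance at least 2, and at least 3 when one of its vertices `v` is adjacent to neither
of the others: the neighbour of `v` in a connecting subgraph is then a fourth vertex. Conversely,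
degree at least `n - 2` means every vertex misses at most one other vertex, so in any 3-set some
vertex is adjacent to the other two, and these two edges connect the set. -/

namespace SimpleGraph

variable {V : Type*} {G : SimpleGraph V}

lemma Subgraph.Connected.ncard_verts_le_ncard_edgeSet_add_one [Finite V] {H : G.Subgraph}
    (hH : H.Connected) : H.verts.ncard ≤ H.edgeSet.ncard + 1 := by
  have h := hH.coe.card_vert_le_card_edgeSet_add_one
  rwa [Nat.card_coe_set_eq, Nat.card_coe_set_eq, ← Set.ncard_image_of_injective _
    (Sym2.map.injective Subtype.coe_injective), H.image_coe_edgeSet_coe] at h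

lemma Connected.le_steinerDist (hG : G.Connected) {S : Set V} {k : ℕ}
    (h : ∀ H : G.Subgraph, H.Connected → S ⊆ H.verts → k ≤ H.edgeSet.ncard) :
    k ≤ steinerDist G S := by
  have htop : (⊤ : G.Subgraph).Connected := ⟨Subgraph.topIso.connected_iff.mpr hG⟩
  obtain ⟨H, hH, hS, hcard⟩ := Nat.sInf_mem
    (⟨_, ⊤, htop, by simp, rfl⟩ : {m : ℕ | ∃ H : G.Subgraph, H.Connected ∧ S ⊆ H.verts ∧
      H.edgeSet.ncard = m}.Nonempty)
  rw [steinerDist, ← hcard]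
  exact h H hH hS

lemma Connected.two_le_steinerDist [Finite V] (hG : G.Connected) {a b c : V} (hab : a ≠ b)
    (hac : a ≠ c) (hbc : b ≠ c) : 2 ≤ steinerDist G {a, b, c} :=
  hG.le_steinerDist fun H hH hS => by
    have h3 : 3 ≤ H.verts.ncard := by
      rw [← Set.ncard_eq_three.2 ⟨a, b, c, hab, hac, hbc, rfl⟩]
      exact Set.ncard_le_ncard hS
    have := hH.ncard_verts_le_ncard_edgeSet_add_one
    omega

lemma Connected.three_le_steinerDist [Finite V] (hG : G.Connected) {v x y : V} (hvx : v ≠ x)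
    (hvy : v ≠ y) (hxy : x ≠ y) (hnx : ¬ G.Adj v x) (hny : ¬ G.Adj v y) :
    3 ≤ steinerDist G {v, x, y} :=
  hG.le_steinerDist fun H hH hS => by
    have : Nontrivial H.verts := ⟨⟨⟨v, hS (by simp)⟩, ⟨x, hS (by simp)⟩, by simpa using hvx⟩⟩
    obtain ⟨w, hw⟩ := hH.preconnected.exists_adj_of_nontrivial ⟨v, hS (by simp)⟩
    have hGw := hw.adj_sub
    have h4 : 4 ≤ H.verts.ncard := by
      have hsub : insert w {v, x, y} ⊆ H.verts := Set.insert_subset hw.snd_mem hS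
      have hw3 : w ∉ ({v, x, y} : Set V) := by
        rintro (rfl | rfl | rfl)
        exacts [hGw.ne rfl, hnx hGw, hny hGw]
      have := Set.ncard_le_ncard hsub
      rwa [Set.ncard_insert_of_notMem hw3,
        Set.ncard_eq_three.2 ⟨v, x, y, hvx, hvy, hxy, rfl⟩] at this
    have := hH.ncard_verts_le_ncard_edgeSet_add_one
    omega

lemma steinerDist_le_two {x y z : V} (hxy : G.Adj x y) (hxz : G.Adj x z) :
    steinerDist G {x, y, z} ≤ 2 := by
  have hH := Subgraph.connected_sup (Subgraph.subgraphOfAdj_connected hxy).preconnected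
    (Subgraph.subgraphOfAdj_connected hxz).preconnected ⟨x, by simp⟩
  refine (steinerDist_le hH ?_).trans ?_
  · rintro u (rfl | rfl | rfl) <;> simp
  · rw [Subgraph.edgeSet_sup, G.edgeSet_subgraphOfAdj, G.edgeSet_subgraphOfAdj,
      Set.singleton_union]
    exact (Set.ncard_insert_le _ _).trans (by simp)

lemma steinerDist_le_two_of_adj_or_adj {a b c : V} (hab : a ≠ b) (hac : a ≠ c) (hbc : b ≠ c)
    (h : ∀ v x y, v ≠ x → v ≠ y → x ≠ y → G.Adj v x ∨ G.Adj v y) :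
    steinerDist G {a, b, c} ≤ 2 := by
  have hcentre : (G.Adj a b ∧ G.Adj a c) ∨ (G.Adj b a ∧ G.Adj b c) ∨ (G.Adj c a ∧ G.Adj c b) := by
    have := h a b c hab hac hbc
    have := h b a c hab.symm hbc hac
    have := h c a b hac.symm hbc.symm hab
    grind [G.adj_comm]
  rcases hcentre with ⟨h₁, h₂⟩ | ⟨h₁, h₂⟩ | ⟨h₁, h₂⟩
  · exact steinerDist_le_two h₁ h₂
  · rw [Set.insert_comm a b]; exact steinerDist_le_two h₁ h₂
  · rw [Set.pair_comm b c, Set.insert_comm a c]; exact steinerDist_le_two h₁ h₂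

lemma steinerDist_le_sdiam [Fintype V] (G : SimpleGraph V) {k : ℕ} {S : Finset V}
    (hS : S.card = k) : steinerDist G S ≤ sdiam G k := by
  refine le_csSup ((Set.finite_range fun S : Finset V => steinerDist G S).subset ?_).bddAbove
    ⟨S, hS, rfl⟩
  rintro _ ⟨S, -, rfl⟩
  exact ⟨S, rfl⟩

lemma sdiam_eq_of_forall_steinerDist_eq [Fintype V] {k m : ℕ} (hk : k ≤ Fintype.card V)
    (h : ∀ S : Finset V, S.card = k → steinerDist G S = m) : sdiam G k = m := by
  obtain ⟨S, -, hS⟩ := Finset.exists_subset_card_eq (s := Finset.univ) (by simpa using hk)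
  have : {m' | ∃ S : Finset V, S.card = k ∧ steinerDist G S = m'} = {m} :=
    Set.eq_singleton_iff_unique_mem.2 ⟨⟨S, hS, h S hS⟩, by rintro _ ⟨S, hS, rfl⟩; exact h S hS⟩
  rw [sdiam, this, csSup_singleton]

lemma le_minDeg_iff [Fintype V] [Nonempty V] {k : ℕ} :
    k ≤ minDeg G ↔ ∀ v, k ≤ (G.neighborSet v).ncard :=
  ⟨fun h v => h.trans (Nat.sInf_le ⟨v, rfl⟩),
    fun h => le_csInf ⟨_, Classical.arbitrary V, rfl⟩ (by rintro _ ⟨v, rfl⟩; exact h v)⟩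

lemma card_sub_two_le_ncard_neighborSet_iff [Fintype V] (v : V) :
    Fintype.card V - 2 ≤ (G.neighborSet v).ncard ↔
      ∀ x y, v ≠ x → v ≠ y → x ≠ y → G.Adj v x ∨ G.Adj v y := by
  have hcard := Set.ncard_add_ncard_compl (insert v (G.neighborSet v))
  rw [Set.ncard_insert_of_notMem G.notMem_neighborSet_self, Nat.card_eq_fintype_card]
    at hcard
  have : Fintype.card V - 2 ≤ (G.neighborSet v).ncard ↔
      (insert v (G.neighborSet v))ᶜ.ncard ≤ 1 := by omega
  rw [this, Set.ncard_le_one_iff]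
  simp only [Set.mem_compl_iff, Set.mem_insert_iff, mem_neighborSet, not_or]
  constructor
  · intro h x y hvx hvy hxy
    by_contra! hxy'
    exact hxy (h ⟨hvx.symm, hxy'.1⟩ ⟨hvy.symm, hxy'.2⟩)
  · rintro h x y ⟨hvx, hx⟩ ⟨hvy, hy⟩
    by_contra hxy
    exact (h x y (Ne.symm hvx) (Ne.symm hvy) hxy).elim hx hy

end SimpleGraph

theorem stmt7 {V : Type*} [Fintype V] (G : SimpleGraph V) (hG : G.Connected)
    (hn : 3 ≤ Fintype.card V) :
    sdiam G 3 = 2 ↔ Fintype.card V - 2 ≤ minDeg G := by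
  classical
  have : Nonempty V := Fintype.card_pos_iff.1 (by omega)
  simp only [le_minDeg_iff, card_sub_two_le_ncard_neighborSet_iff]
  constructor
  · intro hsdiam v x y hvx hvy hxy
    by_contra! hnadj
    have h3 := hG.three_le_steinerDist hvx hvy hxy hnadj.1 hnadj.2
    have := steinerDist_le_sdiam G (Finset.card_eq_three.2 ⟨v, x, y, hvx, hvy, hxy, rfl⟩)
    push_cast at this
    omega
  · intro hadj
    refine sdiam_eq_of_forall_steinerDist_eq hn fun S hS => ?_
    obtain ⟨a, b, c, hab, hac, hbc, rfl⟩ := Finset.card_eq_three.1 hS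
    push_cast
    exact le_antisymm (steinerDist_le_two_of_adj_or_adj hab hac hbc hadj)
      (hG.two_le_steinerDist hab hac hbc)
end

section
/- Every connected graph G of order n ≥ 5 with Δ(G) = n − 2 and sdiam_3(G) ≤ 3 has at least 2n − 5 edges. -/
open SimpleGraph

/-!
Let `v` be a vertex of degree `n - 2` and `u` a vertex other than `v` not adjacent to it, so
`d(u, v) ≥ 2`. A connected subgraph containing `u` and two vertices `b, b'` at distance `≥ 3`
from `u` contains five distinct vertices (`u`, a neighbour of `u`, `b`, `b'`, and a vertex leaving
`{b, b'}`), hence at least four edges; so `sdiam₃ ≤ 3` leaves at most one vertex at distance `≥ 3`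
from `u`. Each of the remaining `≥ n - 3` vertices `w ∉ {u, v}` has a neighbour strictly closer
to `u`; the edges to these neighbours are pairwise distinct and avoid `v`, so together with the
`n - 2` edges at `v` they give `2n - 5` edges.
-/

lemma Set.injOn_sym2_mk_of_lt {α β : Type*} [Preorder β] {r : α → β} {f : α → α} {s : Set α}
    (h : ∀ a ∈ s, r (f a) < r a) : s.InjOn fun a => s(a, f a) := by
  intro a ha b hb hab
  rcases Sym2.eq_iff.mp hab with ⟨rfl, -⟩ | ⟨rfl, hfb⟩
  · rfl
  · have h₁ := h _ ha
    rw [hfb] at h₁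
    exact absurd (h b hb) h₁.not_gt

namespace SimpleGraph

variable {V : Type*} {G : SimpleGraph V}

lemma Subgraph.Connected.exists_adj_of_mem_of_notMem {H : G.Subgraph} (hH : H.Connected)
    (S : Set V) {a c : V} (ha : a ∈ H.verts) (hc : c ∈ H.verts) (haS : a ∈ S) (hcS : c ∉ S) :
    ∃ p ∈ S, ∃ q ∉ S, H.Adj p q := by
  obtain ⟨w⟩ := hH.preconnected ⟨a, ha⟩ ⟨c, hc⟩
  obtain ⟨d, -, hd₁, hd₂⟩ := w.exists_boundary_dart (Subtype.val ⁻¹' S) haS hcS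
  exact ⟨d.fst, hd₁, d.snd, hd₂, d.adj⟩

lemma ne_of_three_le_dist {u c : V} (h : 3 ≤ G.dist u c) : u ≠ c := by
  rintro rfl
  simp at h

lemma not_adj_of_three_le_dist {u c : V} (h : 3 ≤ G.dist u c) : ¬ G.Adj u c := fun huc => by
  have := dist_le huc.toWalk
  simp at this
  omega

lemma not_adj_of_adj_of_three_le_dist {u x c : V} (h : 3 ≤ G.dist u c) (hux : G.Adj u x) :
    ¬ G.Adj x c := fun hxc => by
  have := dist_le (Walk.cons hux hxc.toWalk)
  simp at this
  omega

lemma Subgraph.Connected.four_le_ncard_edgeSet [Finite V] {H : G.Subgraph} (hH : H.Connected)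
    {u b b' : V} (hu : u ∈ H.verts) (hb : b ∈ H.verts) (hb' : b' ∈ H.verts) (hbb' : b ≠ b')
    (hub : 3 ≤ G.dist u b) (hub' : 3 ≤ G.dist u b') : 4 ≤ H.edgeSet.ncard := by
  obtain ⟨u', hu', x, -, hux⟩ :=
    hH.exists_adj_of_mem_of_notMem {u} hu hb rfl (ne_of_three_le_dist hub).symm
  obtain rfl : u = u' := hu'.symm
  obtain ⟨p, hp, q, hq, hpq⟩ := hH.exists_adj_of_mem_of_notMem {b, b'} hb hu (by simp)
    (by simp [ne_of_three_le_dist hub, ne_of_three_le_dist hub'])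
  have hup : 3 ≤ G.dist u p := by rcases hp with rfl | rfl <;> assumption
  have hxb : x ≠ b := fun h => not_adj_of_three_le_dist hub (h ▸ hux.adj_sub)
  have hxb' : x ≠ b' := fun h => not_adj_of_three_le_dist hub' (h ▸ hux.adj_sub)
  have hqu : q ≠ u := fun h => not_adj_of_three_le_dist hup (h ▸ hpq.adj_sub.symm)
  have hqx : q ≠ x := fun h =>
    not_adj_of_adj_of_three_le_dist hup hux.adj_sub (h ▸ hpq.adj_sub.symm)
  simp only [Set.mem_insert_iff, Set.mem_singleton_iff, not_or] at hq
  have hfive : ({u, x, b, b', q} : Set V).ncard = 5 := by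
    rw [Set.ncard_insert_of_notMem, Set.ncard_insert_of_notMem, Set.ncard_insert_of_notMem,
      Set.ncard_pair (Ne.symm hq.2)]
    all_goals simp [*, Ne.symm, ne_of_three_le_dist hub, ne_of_three_le_dist hub', hux.ne]
  have hsub : ({u, x, b, b', q} : Set V) ⊆ H.verts := by
    simp [Set.insert_subset_iff, *, hux.snd_mem, hpq.snd_mem]
  have := Set.ncard_le_ncard hsub
  have := hH.ncard_verts_le_ncard_edgeSet_add_one
  omega

lemma Connected.exists_adj_dist_lt (hG : G.Connected) {u w : V} (hw : w ≠ u) :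
    ∃ x, G.Adj w x ∧ G.dist u x < G.dist u w := by
  obtain ⟨p, hp⟩ := hG.exists_walk_length_eq_dist w u
  cases p with
  | nil => exact absurd rfl hw
  | cons hwx q =>
    refine ⟨_, hwx, ?_⟩
    rw [dist_comm, G.dist_comm (u := u), ← hp, Walk.length_cons]
    exact Nat.lt_succ_of_le (dist_le q)

lemma ncard_incidenceSet (G : SimpleGraph V) (v : V) :
    (G.incidenceSet v).ncard = (G.neighborSet v).ncard := by
  classical
  exact Nat.card_congr (G.incidenceSetEquivNeighborSet v)

end SimpleGraph

lemma steinerDist_le_ncard_edgeSet {V : Type*} [Finite V] (G : SimpleGraph V) (S : Set V) :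
    steinerDist G S ≤ G.edgeSet.ncard := by
  unfold steinerDist
  obtain h | ⟨_, H, hH, hS, rfl⟩ := Set.eq_empty_or_nonempty
    {m | ∃ H : G.Subgraph, H.Connected ∧ S ⊆ H.verts ∧ H.edgeSet.ncard = m}
  · simp [h]
  · exact le_trans (Nat.sInf_le ⟨H, hH, hS, rfl⟩) (Set.ncard_le_ncard H.edgeSet_subset)

lemma steinerDist_le_sdiam {V : Type*} [Fintype V] (G : SimpleGraph V) {k : ℕ} {S : Finset V}
    (hS : S.card = k) : steinerDist G S ≤ sdiam G k :=
  le_csSup ⟨G.edgeSet.ncard, by rintro _ ⟨T, -, rfl⟩; exact steinerDist_le_ncard_edgeSet G T⟩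
    ⟨S, hS, rfl⟩

namespace SimpleGraph

variable {V : Type*} {G : SimpleGraph V}

lemma Connected.exists_subgraph_ncard_edgeSet_eq_steinerDist (hG : G.Connected) (S : Set V) :
    ∃ H : G.Subgraph, H.Connected ∧ S ⊆ H.verts ∧ H.edgeSet.ncard = steinerDist G S :=
  Nat.sInf_mem (s := {m | ∃ H : G.Subgraph, H.Connected ∧ S ⊆ H.verts ∧ H.edgeSet.ncard = m})
    ⟨_, ⊤, Subgraph.connected_iff'.mpr (Subgraph.topIso.connected_iff.mpr hG), by simp, rfl⟩

lemma Connected.subsingleton_three_le_dist [Fintype V] (hG : G.Connected)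
    (hsd : sdiam G 3 ≤ 3) (u : V) : {w | 3 ≤ G.dist u w}.Subsingleton := by
  classical
  intro b hb b' hb'
  by_contra hbb'
  have hcard : ({u, b, b'} : Finset V).card = 3 :=
    Finset.card_eq_three.mpr ⟨u, b, b', ne_of_three_le_dist hb, ne_of_three_le_dist hb', hbb', rfl⟩
  obtain ⟨H, hH, hS, hHS⟩ :=
    hG.exists_subgraph_ncard_edgeSet_eq_steinerDist ↑({u, b, b'} : Finset V)
  have h₄ := hH.four_le_ncard_edgeSet (hS (by simp)) (hS (by simp)) (hS (by simp)) hbb' hb hb'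
  have h₃ := steinerDist_le_sdiam G hcard
  omega

lemma Connected.ncard_neighborSet_add_ncard_le [Finite V] (hG : G.Connected) (u v : V) :
    (G.neighborSet v).ncard + {w | w ≠ u ∧ w ≠ v ∧ G.dist u w ≤ G.dist u v}.ncard ≤
      G.edgeSet.ncard := by
  set K := {w | w ≠ u ∧ w ≠ v ∧ G.dist u w ≤ G.dist u v}
  choose! p hadj hlt using fun w (hw : w ≠ u) => hG.exists_adj_dist_lt hw
  have hinj : K.InjOn fun w => s(w, p w) :=
    Set.injOn_sym2_mk_of_lt (r := G.dist u) fun w hw => hlt w hw.1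
  have hdisj : Disjoint (G.incidenceSet v) ((fun w => s(w, p w)) '' K) := by
    rw [Set.disjoint_right]
    rintro _ ⟨w, ⟨hwu, hwv, hwd⟩, rfl⟩ ⟨-, hv⟩
    rcases Sym2.mem_iff.mp hv with rfl | hv
    · exact hwv rfl
    · exact (hlt w hwu).not_ge (hv ▸ hwd)
  have hsub : G.incidenceSet v ∪ (fun w => s(w, p w)) '' K ⊆ G.edgeSet :=
    Set.union_subset (G.incidenceSet_subset v) (by rintro _ ⟨w, hw, rfl⟩; exact hadj w hw.1)
  calc (G.neighborSet v).ncard + K.ncard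
      = (G.incidenceSet v ∪ (fun w => s(w, p w)) '' K).ncard := by
        rw [Set.ncard_union_eq hdisj, hinj.ncard_image, ncard_incidenceSet]
    _ ≤ G.edgeSet.ncard := Set.ncard_le_ncard hsub

lemma Connected.card_le_ncard_add_three [Fintype V] (hG : G.Connected) (hsd : sdiam G 3 ≤ 3)
    {u v : V} (huv : u ≠ v) (hnadj : ¬ G.Adj u v) :
    Fintype.card V ≤ {w | w ≠ u ∧ w ≠ v ∧ G.dist u w ≤ G.dist u v}.ncard + 3 := by
  set K := {w | w ≠ u ∧ w ≠ v ∧ G.dist u w ≤ G.dist u v}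
  have h₂ := hG.one_lt_dist_of_ne_of_not_adj huv hnadj
  have hcompl : Kᶜ ⊆ {u, v} ∪ {w | 3 ≤ G.dist u w} := by
    intro w hw
    by_contra hw'
    simp only [Set.mem_union, Set.mem_insert_iff, Set.mem_singleton_iff, Set.mem_ofPred_eq,
      not_or, not_le] at hw'
    exact hw ⟨hw'.1.1, hw'.1.2, by omega⟩
  have hfar : {w | 3 ≤ G.dist u w}.ncard ≤ 1 :=
    Set.ncard_le_one_iff_subsingleton.mpr (hG.subsingleton_three_le_dist hsd u)
  calc Fintype.card V = K.ncard + Kᶜ.ncard := by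
        rw [Set.ncard_add_ncard_compl, Nat.card_eq_fintype_card]
    _ ≤ K.ncard + (({u, v} : Set V).ncard + {w | 3 ≤ G.dist u w}.ncard) := by
        gcongr
        exact (Set.ncard_le_ncard hcompl).trans (Set.ncard_union_le _ _)
    _ ≤ K.ncard + 3 := by
        rw [Set.ncard_pair huv]
        omega

end SimpleGraph

theorem stmt17_general {V : Type*} [Fintype V] (n : ℕ)
    (hcard : Fintype.card V = n) (G : SimpleGraph V) (hconn : G.Connected)
    (hmax : maxDeg G = n - 2) (hsd : sdiam G 3 ≤ 3) :
    2 * n - 5 ≤ G.edgeSet.ncard := by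
  obtain ⟨v, -, hv⟩ := Finset.exists_mem_eq_sup Finset.univ
    (Finset.univ_nonempty_iff.mpr hconn.nonempty) fun w => (G.neighborSet w).ncard
  have hdeg : (G.neighborSet v).ncard = n - 2 := hv ▸ hmax
  rcases Nat.lt_or_ge n 3 with hn | hn
  · omega
  obtain ⟨u, hvu, hnadj⟩ : ∃ u, v ≠ u ∧ ¬ G.Adj v u := by
    by_contra! h
    have := Set.ncard_insert_le v (G.neighborSet v)
    rw [G.insert_neighborSet_eq_univ.mpr fun w hw => h w hw, Set.ncard_univ,
      Nat.card_eq_fintype_card] at this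
    omega
  have := hconn.ncard_neighborSet_add_ncard_le u v
  have := hconn.card_le_ncard_add_three hsd hvu.symm (fun h => hnadj h.symm)
  omega

theorem stmt17 {V : Type*} [Fintype V] (n : ℕ) (hn : 5 ≤ n)
    (hcard : Fintype.card V = n) (G : SimpleGraph V) (hconn : G.Connected)
    (hmax : maxDeg G = n - 2) (hsd : sdiam G 3 ≤ 3) :
    2 * n - 5 ≤ G.edgeSet.ncard :=
  stmt17_general n hcard G hconn hmax hsd
end

section
/- For all integers n and d with 4 ≤ d ≤ n − 1, there exists a connected graph G of order n with sdiam_3(G) ≤ d and e(G) = (n−d+1)(n−d+2)/2 + d − 3; consequently e_3(n, ℓ, d) ≤ (n−d+1)(n−d+2)/2 + d − 3 for the corresponding maximum degree ℓ = n − d + 1. -/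
open SimpleGraph

/-!
Let `m = n - d + 1`. On `Fin n` take the clique on `0, …, m - 1` and the path `m, m + 1, …, n - 1`,
and join `m` to every clique vertex except `0`. All degrees are at most `m`, with equality at `1`,
and the handshake lemma gives `m (m + 1) / 2 + d - 3` edges. Any three vertices lie on one walk
of length at most `d`: three clique vertices on a walk of length `2`; otherwise at most two of them,
say `u` and `x ≠ 0`, are clique vertices, and the walk `u, x, m, m + 1, …, n - 1` of length `d`
visits all three.
-/

open Finset

theorem SimpleGraph.Walk.ncard_edgeSet_le_length {V : Type*} {G : SimpleGraph V} {u v : V}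
    (p : G.Walk u v) : p.edgeSet.ncard ≤ p.length := by
  classical
  calc p.edgeSet.ncard = p.edges.toFinset.card := by
        rw [← Set.ncard_coe_finset, List.coe_toFinset]; rfl
    _ ≤ p.edges.length := List.toFinset_card_le _
    _ = p.length := p.length_edges

theorem steinerDist_le_length {V : Type*} {G : SimpleGraph V} {S : Set V} {u v : V}
    (p : G.Walk u v) (hS : ∀ s ∈ S, s ∈ p.support) : steinerDist G S ≤ p.length := by
  refine (Nat.sInf_le ?_).trans (p.edgeSet_toSubgraph ▸ p.ncard_edgeSet_le_length)
  exact ⟨p.toSubgraph, p.toSubgraph_connected, fun s hs => p.mem_verts_toSubgraph.2 (hS s hs), rfl⟩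

theorem sdiam_le {V : Type*} [Fintype V] {G : SimpleGraph V} {k d : ℕ}
    (h : ∀ S : Finset V, S.card = k → steinerDist G S ≤ d) : sdiam G k ≤ d :=
  csSup_le' fun _ ⟨S, hS, hd⟩ => hd ▸ h S hS

theorem maxDeg_eq_of_degree_le {V : Type*} [Fintype V] {G : SimpleGraph V} [DecidableRel G.Adj]
    {ℓ : ℕ} (hle : ∀ v, G.degree v ≤ ℓ) (v : V) (hv : G.degree v = ℓ) : maxDeg G = ℓ := by
  have hdeg (w : V) : (G.neighborSet w).ncard = G.degree w := by
    rw [degree, neighborFinset_def, Set.ncard_eq_toFinset_card']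
  refine le_antisymm (Finset.sup_le fun w _ => hdeg w ▸ hle w) ?_
  exact hv ▸ hdeg v ▸ Finset.le_sup (f := fun w => (G.neighborSet w).ncard) (mem_univ v)

theorem card_filter_univ_fin {n : ℕ} (p : ℕ → Prop) [DecidablePred p] :
    #(univ.filter fun a : Fin n => p a) = #((range n).filter p) := by
  rw [← Nat.Iio_eq_range, ← Fin.map_valEmbedding_univ, filter_map, card_map]
  rfl

theorem SimpleGraph.exists_walk_of_adj_succ {n : ℕ} {G : SimpleGraph (Fin n)} (a : Fin n)
    (hadj : ∀ i j : Fin n, a ≤ i → (j : ℕ) = i + 1 → G.Adj i j) (b : Fin n) (hab : a ≤ b) :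
    ∃ p : G.Walk a b, p.length = b - a ∧ ∀ v, a ≤ v → v ≤ b → v ∈ p.support := by
  obtain ⟨k, hk⟩ : ∃ k, (b : ℕ) = a + k := ⟨b - a, by omega⟩
  induction k generalizing b with
  | zero =>
    obtain rfl : b = a := Fin.ext hk
    exact ⟨.nil, by simp, fun v h1 h2 => by simp [le_antisymm h2 h1]⟩
  | succ k ih =>
    let c : Fin n := ⟨a + k, by omega⟩
    obtain ⟨p, hp, hsupp⟩ := ih c (Fin.le_def.2 (by simp [c])) rfl
    refine ⟨p.concat (hadj c b (Fin.le_def.2 (by simp [c])) (by simp only [c]; omega)), ?_, ?_⟩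
    · simp only [Walk.length_concat, hp, c]; omega
    · intro v h1 h2
      rw [Walk.support_concat, List.mem_append, List.mem_singleton]
      rcases eq_or_lt_of_le h2 with h | h
      · exact Or.inr h
      · exact Or.inl (hsupp v h1 (Fin.le_def.2 (by rw [Fin.lt_def] at h; simp only [c]; omega)))

def cliquePathAdj (m i j : ℕ) : Prop :=
  i ≠ j ∧ (i < m ∧ j < m ∨ m ≤ i ∧ m ≤ j ∧ (i + 1 = j ∨ j + 1 = i) ∨
    i = m ∧ 0 < j ∧ j < m ∨ j = m ∧ 0 < i ∧ i < m)

instance (m i j : ℕ) : Decidable (cliquePathAdj m i j) := by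
  unfold cliquePathAdj; infer_instance

def cliquePathGraph (n m : ℕ) : SimpleGraph (Fin n) where
  Adj a b := cliquePathAdj m a b
  symm := ⟨fun _ _ h => by unfold cliquePathAdj at *; omega⟩
  loopless := ⟨fun _ h => h.1 rfl⟩

instance (n m : ℕ) : DecidableRel (cliquePathGraph n m).Adj := fun a b =>
  inferInstanceAs (Decidable (cliquePathAdj m a b))

def cliquePathDegree (n m i : ℕ) : ℕ :=
  if i = 0 then m - 1 else if i ≤ m then m else if i + 1 = n then 1 else 2

namespace cliquePathGraph

variable {n m : ℕ}

theorem adj_iff {a b : Fin n} : (cliquePathGraph n m).Adj a b ↔ cliquePathAdj m a b := Iff.rfl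

theorem degree_eq (hm : 0 < m) (hmn : m + 2 ≤ n) (v : Fin n) :
    (cliquePathGraph n m).degree v = cliquePathDegree n m v := by
  have hv := v.isLt
  rw [degree, neighborFinset_eq_filter]
  refine (card_filter_univ_fin (cliquePathAdj m v)).trans ?_
  unfold cliquePathDegree
  split_ifs with h0 hle hlast
  · rw [show (range n).filter (cliquePathAdj m v) = Ioo 0 m by
      ext j; simp only [mem_filter, mem_range, mem_Ioo, cliquePathAdj]; omega,
      Nat.card_Ioo, Nat.sub_zero]
  · rcases hle.lt_or_eq with hlt | heq
    · rw [show (range n).filter (cliquePathAdj m v) = (range (m + 1)).erase v by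
        ext j; simp only [mem_filter, mem_range, mem_erase, cliquePathAdj]; omega,
        card_erase_of_mem (mem_range.2 (by omega)), card_range, Nat.add_sub_cancel]
    · rw [show (range n).filter (cliquePathAdj m v) = insert (m + 1) (Ioo 0 m) by
        ext j; simp only [mem_filter, mem_range, mem_insert, mem_Ioo, cliquePathAdj]; omega,
        card_insert_of_notMem (by simp), Nat.card_Ioo]
      omega
  · rw [show (range n).filter (cliquePathAdj m v) = {(v : ℕ) - 1} by
      ext j; simp only [mem_filter, mem_range, mem_singleton, cliquePathAdj]; omega,
      card_singleton]
  · rw [show (range n).filter (cliquePathAdj m v) = {(v : ℕ) - 1, (v : ℕ) + 1} by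
      ext j; simp only [mem_filter, mem_range, mem_insert, mem_singleton, cliquePathAdj]; omega,
      card_pair (by omega)]

theorem sum_cliquePathDegree (hm : 0 < m) (hmn : m + 2 ≤ n) :
    ∑ i ∈ range n, cliquePathDegree n m i = m * (m + 1) + 2 * (n - m - 2) := by
  obtain ⟨k, rfl⟩ : ∃ k, n = m + 1 + k + 1 := ⟨n - m - 2, by omega⟩
  have hzero : cliquePathDegree (m + 1 + k + 1) m 0 = m - 1 := if_pos rfl
  have hclique (i : ℕ) (hi : i < m) : cliquePathDegree (m + 1 + k + 1) m (i + 1) = m := by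
    rw [cliquePathDegree, if_neg (by omega), if_pos (by omega)]
  have hpath (i : ℕ) (hi : i < k) : cliquePathDegree (m + 1 + k + 1) m (m + 1 + i) = 2 := by
    rw [cliquePathDegree, if_neg (by omega), if_neg (by omega), if_neg (by omega)]
  have hlast : cliquePathDegree (m + 1 + k + 1) m (m + 1 + k) = 1 := by
    rw [cliquePathDegree, if_neg (by omega), if_neg (by omega), if_pos (by omega)]
  rw [sum_range_succ, sum_range_add, sum_range_succ', hzero, hlast,
    sum_congr rfl fun i hi => hclique i (mem_range.1 hi),
    sum_congr rfl fun i hi => hpath i (mem_range.1 hi)]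
  simp only [sum_const, card_range, smul_eq_mul]
  rw [Nat.mul_add_one m m]
  omega

theorem two_mul_card_edgeFinset (hm : 0 < m) (hmn : m + 2 ≤ n) :
    2 * #(cliquePathGraph n m).edgeFinset = m * (m + 1) + 2 * (n - m - 2) := by
  rw [← sum_degrees_eq_twice_card_edges, ← sum_cliquePathDegree hm hmn,
    ← Fin.sum_univ_eq_sum_range]
  exact sum_congr rfl fun v _ => degree_eq hm hmn v

theorem maxDeg_eq (hm : 2 ≤ m) (hmn : m + 2 ≤ n) : maxDeg (cliquePathGraph n m) = m := by
  obtain ⟨v₁, hv₁⟩ : ∃ v : Fin n, (v : ℕ) = 1 := ⟨⟨1, by omega⟩, rfl⟩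
  refine maxDeg_eq_of_degree_le (fun v => ?_) v₁ ?_
  · rw [degree_eq (by omega) hmn, cliquePathDegree]
    split_ifs <;> omega
  · rw [degree_eq (by omega) hmn, cliquePathDegree, if_neg (by omega), if_pos (by omega)]

theorem exists_walk_covering_path (hmn : m + 2 ≤ n) {u x : Fin n} (hu : (u : ℕ) < m)
    (hx : 0 < (x : ℕ)) (hxm : (x : ℕ) < m) (hux : u ≠ x) :
    ∃ (w : Fin n) (p : (cliquePathGraph n m).Walk u w), p.length = n - m + 1 ∧
      x ∈ p.support ∧ ∀ v : Fin n, m ≤ (v : ℕ) → v ∈ p.support := by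
  let start : Fin n := ⟨m, by omega⟩
  let last : Fin n := ⟨n - 1, by omega⟩
  obtain ⟨q, hq, hsupp⟩ := exists_walk_of_adj_succ (G := cliquePathGraph n m) start
    (fun i j hi hj => by
      rw [Fin.le_def] at hi; simp only [adj_iff, cliquePathAdj, start] at *; omega)
    last (Fin.le_def.2 (by simp only [start, last]; omega))
  have hadj_ux : (cliquePathGraph n m).Adj u x := by rw [adj_iff, cliquePathAdj]; omega
  have hadj_xs : (cliquePathGraph n m).Adj x start := by
    rw [adj_iff, show (start : ℕ) = m from rfl, cliquePathAdj]; omega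
  refine ⟨last, .cons hadj_ux (.cons hadj_xs q), ?_, by simp, fun v hv => ?_⟩
  · simp only [Walk.length_cons, hq, start, last]; omega
  · simp only [Walk.support_cons, List.mem_cons]
    exact Or.inr (Or.inr (hsupp v (Fin.le_def.2 hv) (Fin.le_def.2 (by simp only [last]; omega))))

theorem connected (hm : 2 ≤ m) (hmn : m + 2 ≤ n) : (cliquePathGraph n m).Connected := by
  obtain ⟨v₀, hv₀⟩ : ∃ v : Fin n, (v : ℕ) = 0 := ⟨⟨0, by omega⟩, rfl⟩
  obtain ⟨v₁, hv₁⟩ : ∃ v : Fin n, (v : ℕ) = 1 := ⟨⟨1, by omega⟩, rfl⟩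
  obtain ⟨w, p, -, -, hpath⟩ := exists_walk_covering_path hmn (u := v₀) (x := v₁)
    (by omega) (by omega) (by omega) (by omega)
  refine (connected_iff_exists_forall_reachable _).2 ⟨v₀, fun v => ?_⟩
  by_cases hv : (v : ℕ) < m
  · rcases eq_or_ne v₀ v with rfl | h
    · rfl
    · exact Adj.reachable (by rw [adj_iff, cliquePathAdj]; omega)
  · exact ⟨p.takeUntil v (hpath v (by omega))⟩

theorem exists_cover_pair (hm : 2 ≤ m) (hmn : m ≤ n) {a b : Fin n} (hab : a ≠ b) :
    ∃ u x : Fin n, (u : ℕ) < m ∧ 0 < (x : ℕ) ∧ (x : ℕ) < m ∧ u ≠ x ∧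
      ((a : ℕ) < m → a = u ∨ a = x) ∧ ((b : ℕ) < m → b = u ∨ b = x) := by
  obtain ⟨v₀, hv₀⟩ : ∃ v : Fin n, (v : ℕ) = 0 := ⟨⟨0, by omega⟩, rfl⟩
  obtain ⟨v₁, hv₁⟩ : ∃ v : Fin n, (v : ℕ) = 1 := ⟨⟨1, by omega⟩, rfl⟩
  by_cases hb : 0 < (b : ℕ) ∧ (b : ℕ) < m
  · by_cases ha : (a : ℕ) < m
    · exact ⟨a, b, by omega⟩
    · exact ⟨v₀, b, by omega⟩
  · by_cases ha : 0 < (a : ℕ) ∧ (a : ℕ) < m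
    · exact ⟨v₀, a, by omega⟩
    · exact ⟨v₀, v₁, by omega⟩

theorem steinerDist_le_of_card_eq_three (hm : 2 ≤ m) (hmn : m + 2 ≤ n) (S : Finset (Fin n))
    (hS : #S = 3) :
    steinerDist (cliquePathGraph n m) S ≤ n - m + 1 := by
  by_cases hK : ∀ s ∈ S, (s : ℕ) < m
  · obtain ⟨a, b, c, hab, hac, hbc, rfl⟩ := card_eq_three.1 hS
    simp only [mem_insert, mem_singleton, forall_eq_or_imp, forall_eq] at hK
    have hadj_ab : (cliquePathGraph n m).Adj a b := by rw [adj_iff, cliquePathAdj]; omega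
    have hadj_bc : (cliquePathGraph n m).Adj b c := by rw [adj_iff, cliquePathAdj]; omega
    refine (steinerDist_le_length (.cons hadj_ab (.cons hadj_bc .nil)) ?_).trans ?_
    · simp
    · simp only [Walk.length_cons, Walk.length_nil]; omega
  · push Not at hK
    obtain ⟨s, hs, hsm⟩ := hK
    obtain ⟨a, b, hab, hSab⟩ :=
      card_eq_two.1 (by rw [card_erase_of_mem hs, hS] : #(S.erase s) = 2)
    obtain ⟨u, x, hu, hx, hxm, hux, ha, hb⟩ := exists_cover_pair hm (by omega) hab
    obtain ⟨w, p, hp, hxp, hpath⟩ := exists_walk_covering_path hmn hu hx hxm hux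
    refine (steinerDist_le_length p fun t ht => ?_).trans hp.le
    by_cases htm : m ≤ (t : ℕ)
    · exact hpath t htm
    · have ht' : t ∈ S.erase s := mem_erase.2 ⟨by rintro rfl; omega, ht⟩
      rw [hSab, mem_insert, mem_singleton] at ht'
      rcases ht' with rfl | rfl
      · rcases ha (by omega) with rfl | rfl
        · exact p.start_mem_support
        · exact hxp
      · rcases hb (by omega) with rfl | rfl
        · exact p.start_mem_support
        · exact hxp

end cliquePathGraph

theorem stmt19 (n d : ℕ) (hd : 4 ≤ d) (hdn : d ≤ n - 1) :
    ∃ G : SimpleGraph (Fin n), G.Connected ∧ sdiam G 3 ≤ d ∧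
      maxDeg G = n - d + 1 ∧
      G.edgeSet.ncard = (n - d + 1) * (n - d + 2) / 2 + d - 3 ∧
      e3 n (n - d + 1) d ≤ ((n - d + 1) * (n - d + 2) / 2 + d - 3 : ℕ) := by
  rw [show n - d + 2 = n - d + 1 + 1 by omega]
  set m := n - d + 1
  have hm : 2 ≤ m := by omega
  have hmn : m + 2 ≤ n := by omega
  have hsdiam : sdiam (cliquePathGraph n m) 3 ≤ d :=
    sdiam_le fun S hS =>
      (cliquePathGraph.steinerDist_le_of_card_eq_three hm hmn S hS).trans (by omega)
  have hmax : maxDeg (cliquePathGraph n m) = m := cliquePathGraph.maxDeg_eq hm hmn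
  have hedges : (cliquePathGraph n m).edgeSet.ncard = m * (m + 1) / 2 + d - 3 := by
    have := cliquePathGraph.two_mul_card_edgeFinset (by omega) hmn
    rw [← coe_edgeFinset, Set.ncard_coe_finset]
    omega
  exact ⟨_, cliquePathGraph.connected hm hmn, hsdiam, hmax, hedges,
    sInf_le ⟨_, hmax, hsdiam, by rw [hedges]⟩⟩
end
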